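/- Let e = E₁₂, f = E₂₁, n₁ = E₁₃, n₂ = E₂₃, h = E₁₁ − E₂₂ in the Lie algebra of 3×3 complex matrices with bracket [A,B] = AB − BA. Let Ω ⊆ ℝ² be open and let u¹, u² : Ω → ℝ be smooth functions of (x,t) satisfying the Kersten–Krasilshchik coupled KdV–mKdV system: u¹_t = −u¹_{xxx} + 6u¹u¹_x − 3u²u²_{xxx} − 3u²_xu²_{xx} + 3u¹_x(u²)² + 6u¹u²u²_x and u²_t = −u²_{xxx} + 3(u²)²u²_x + 3u¹u²_x + 3u¹_xu². Define the matrix-valued functions M = ((u²)² − u¹)·e − f − u²·n₁ and N = (u¹_{xx} + u²u²_{xx} + (u²_x)² − 2(u¹)² + (u²)⁴ + (u²)²u¹)·e − (u¹_x + u²u²_x)·h − ((u²)² + 2u¹)·f + (u²_{xx} − (u²)³ − 2u¹u²)·n₁ + u²_x·n₂. Then the zero-curvature equation ∂N/∂x − ∂M/∂t + M·N − N·M = 0 holds at every point of Ω. -/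

import Mathlib

/-- Partial derivative in the first (space) variable. -/
noncomputable def pdx (f : ℝ → ℝ → ℝ) : ℝ → ℝ → ℝ :=
  fun x t => deriv (fun y => f y t) x

/-- Partial derivative in the second (time) variable. -/
noncomputable def pdt (f : ℝ → ℝ → ℝ) : ℝ → ℝ → ℝ :=
  fun x t => deriv (fun s => f x s) t

/-- Entrywise partial `x`-derivative of a matrix-valued function. -/
noncomputable def mdx (F : ℝ → ℝ → Matrix (Fin 3) (Fin 3) ℂ) :
    ℝ → ℝ → Matrix (Fin 3) (Fin 3) ℂ :=
  fun x t => Matrix.of fun i j => deriv (fun y => F y t i j) x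

/-- Entrywise partial `t`-derivative of a matrix-valued function. -/
noncomputable def mdt (F : ℝ → ℝ → Matrix (Fin 3) (Fin 3) ℂ) :
    ℝ → ℝ → Matrix (Fin 3) (Fin 3) ℂ :=
  fun x t => Matrix.of fun i j => deriv (fun s => F x s i j) t

private lemma zc_pdx_eq_fderiv {v : ℝ → ℝ → ℝ} {x t : ℝ}
    (hF : DifferentiableAt ℝ (fun p : ℝ × ℝ => v p.1 p.2) (x, t)) :
    pdx v x t = fderiv ℝ (fun p : ℝ × ℝ => v p.1 p.2) (x, t) (1, 0) := by
  have hg : HasDerivAt (fun y : ℝ => (y, t)) ((1:ℝ), (0:ℝ)) x :=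
    (hasDerivAt_id x).prodMk (hasDerivAt_const x t)
  exact (hF.hasFDerivAt.comp_hasDerivAt x hg).deriv

private lemma zc_sliceX {Ω : Set (ℝ × ℝ)} (hΩ : IsOpen Ω) {v : ℝ → ℝ → ℝ}
    (hv : ContDiffOn ℝ (⊤ : ℕ∞) (fun p : ℝ × ℝ => v p.1 p.2) Ω) {x t : ℝ} (hp : (x, t) ∈ Ω) :
    HasDerivAt (fun y => v y t) (pdx v x t) x := by
  have hF : DifferentiableAt ℝ (fun p : ℝ × ℝ => v p.1 p.2) (x, t) :=
    (hv.contDiffAt (hΩ.mem_nhds hp)).differentiableAt (by simp)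
  have : DifferentiableAt ℝ (fun y => v y t) x :=
    by have hg : DifferentiableAt ℝ (fun y : ℝ => (y, t)) x := differentiableAt_fun_id.prodMk (differentiableAt_const t); exact hF.comp x hg
  exact this.hasDerivAt

private lemma zc_sliceT {Ω : Set (ℝ × ℝ)} (hΩ : IsOpen Ω) {v : ℝ → ℝ → ℝ}
    (hv : ContDiffOn ℝ (⊤ : ℕ∞) (fun p : ℝ × ℝ => v p.1 p.2) Ω) {x t : ℝ} (hp : (x, t) ∈ Ω) :
    HasDerivAt (fun s => v x s) (pdt v x t) t := by
  have hF : DifferentiableAt ℝ (fun p : ℝ × ℝ => v p.1 p.2) (x, t) :=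
    (hv.contDiffAt (hΩ.mem_nhds hp)).differentiableAt (by simp)
  have : DifferentiableAt ℝ (fun s => v x s) t :=
    hF.comp t ((differentiableAt_const x).prodMk differentiableAt_id)
  exact this.hasDerivAt

private lemma zc_pdx_contDiffOn {Ω : Set (ℝ × ℝ)} (hΩ : IsOpen Ω) {v : ℝ → ℝ → ℝ}
    (hv : ContDiffOn ℝ (⊤ : ℕ∞) (fun p : ℝ × ℝ => v p.1 p.2) Ω) :
    ContDiffOn ℝ (⊤ : ℕ∞) (fun p : ℝ × ℝ => pdx v p.1 p.2) Ω := by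
  have h1 : ContDiffOn ℝ (⊤ : ℕ∞) (fun p : ℝ × ℝ =>
      fderiv ℝ (fun q : ℝ × ℝ => v q.1 q.2) p ((1:ℝ), (0:ℝ))) Ω :=
    (hv.fderiv_of_isOpen hΩ (by simp)).clm_apply contDiffOn_const
  refine h1.congr fun p hp => ?_
  have hF : DifferentiableAt ℝ (fun q : ℝ × ℝ => v q.1 q.2) (p.1, p.2) :=
    (hv.contDiffAt (hΩ.mem_nhds hp)).differentiableAt (by simp)
  exact zc_pdx_eq_fderiv hF

set_option maxHeartbeats 2000000 in
/-- The `sl₃`-valued zero-curvature representation of the Kersten–Krasilshchik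
coupled KdV–mKdV system (Sakovich's representation at `λ = 0`): if `u¹, u²`
are smooth solutions of the system on an open `Ω ⊆ ℝ²`, then
`∂N/∂x − ∂M/∂t + MN − NM = 0` on `Ω`. -/
theorem stmt10
    (e f n₁ n₂ h : Matrix (Fin 3) (Fin 3) ℂ)
    (he : e = Matrix.single 0 1 1)
    (hf : f = Matrix.single 1 0 1)
    (hn₁ : n₁ = Matrix.single 0 2 1)
    (hn₂ : n₂ = Matrix.single 1 2 1)
    (hh : h = Matrix.single 0 0 1 - Matrix.single 1 1 1)
    (Ω : Set (ℝ × ℝ)) (hΩ : IsOpen Ω) (u₁ u₂ : ℝ → ℝ → ℝ)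
    (hu₁ : ContDiffOn ℝ (⊤ : ℕ∞) (fun p : ℝ × ℝ => u₁ p.1 p.2) Ω)
    (hu₂ : ContDiffOn ℝ (⊤ : ℕ∞) (fun p : ℝ × ℝ => u₂ p.1 p.2) Ω)
    (heq₁ : ∀ p ∈ Ω, pdt u₁ p.1 p.2
      = -(pdx^[3] u₁ p.1 p.2) + 6 * u₁ p.1 p.2 * pdx u₁ p.1 p.2
        - 3 * u₂ p.1 p.2 * pdx^[3] u₂ p.1 p.2
        - 3 * pdx u₂ p.1 p.2 * pdx^[2] u₂ p.1 p.2
        + 3 * pdx u₁ p.1 p.2 * (u₂ p.1 p.2) ^ 2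
        + 6 * u₁ p.1 p.2 * u₂ p.1 p.2 * pdx u₂ p.1 p.2)
    (heq₂ : ∀ p ∈ Ω, pdt u₂ p.1 p.2
      = -(pdx^[3] u₂ p.1 p.2) + 3 * (u₂ p.1 p.2) ^ 2 * pdx u₂ p.1 p.2
        + 3 * u₁ p.1 p.2 * pdx u₂ p.1 p.2 + 3 * pdx u₁ p.1 p.2 * u₂ p.1 p.2)
    (M N : ℝ → ℝ → Matrix (Fin 3) (Fin 3) ℂ)
    (hM : ∀ x t, M x t
      = (((u₂ x t) ^ 2 - u₁ x t : ℝ) : ℂ) • e - f - ((u₂ x t : ℝ) : ℂ) • n₁)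
    (hN : ∀ x t, N x t
      = ((pdx^[2] u₁ x t + u₂ x t * pdx^[2] u₂ x t + (pdx u₂ x t) ^ 2
            - 2 * (u₁ x t) ^ 2 + (u₂ x t) ^ 4 + (u₂ x t) ^ 2 * u₁ x t : ℝ) : ℂ) • e
        - ((pdx u₁ x t + u₂ x t * pdx u₂ x t : ℝ) : ℂ) • h
        - (((u₂ x t) ^ 2 + 2 * u₁ x t : ℝ) : ℂ) • f
        + ((pdx^[2] u₂ x t - (u₂ x t) ^ 3 - 2 * u₁ x t * u₂ x t : ℝ) : ℂ) • n₁
        + ((pdx u₂ x t : ℝ) : ℂ) • n₂) :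
    ∀ p ∈ Ω, mdx N p.1 p.2 - mdt M p.1 p.2
      + M p.1 p.2 * N p.1 p.2 - N p.1 p.2 * M p.1 p.2 = 0 := by
  rintro ⟨x, t⟩ hp
  -- smoothness of iterated x-derivatives
  have na1 := zc_pdx_contDiffOn hΩ hu₁
  have na2 := zc_pdx_contDiffOn hΩ na1
  have nb1 := zc_pdx_contDiffOn hΩ hu₂
  have nb2 := zc_pdx_contDiffOn hΩ nb1
  -- HasDerivAt facts at (x, t)
  have ha0 : HasDerivAt (fun y => u₁ y t) (pdx u₁ x t) x := zc_sliceX hΩ hu₁ hp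
  have ha1 : HasDerivAt (fun y => pdx u₁ y t) (pdx^[2] u₁ x t) x := zc_sliceX hΩ na1 hp
  have ha2 : HasDerivAt (fun y => pdx^[2] u₁ y t) (pdx^[3] u₁ x t) x := zc_sliceX hΩ na2 hp
  have hb0 : HasDerivAt (fun y => u₂ y t) (pdx u₂ x t) x := zc_sliceX hΩ hu₂ hp
  have hb1 : HasDerivAt (fun y => pdx u₂ y t) (pdx^[2] u₂ x t) x := zc_sliceX hΩ nb1 hp
  have hb2 : HasDerivAt (fun y => pdx^[2] u₂ y t) (pdx^[3] u₂ x t) x := zc_sliceX hΩ nb2 hp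
  have hat : HasDerivAt (fun s => u₁ x s) (pdt u₁ x t) t := zc_sliceT hΩ hu₁ hp
  have hbt : HasDerivAt (fun s => u₂ x s) (pdt u₂ x t) t := zc_sliceT hΩ hu₂ hp
  -- PDEs at (x, t)
  have E1 : pdt u₁ x t
      = -(pdx^[3] u₁ x t) + 6 * u₁ x t * pdx u₁ x t
        - 3 * u₂ x t * pdx^[3] u₂ x t
        - 3 * pdx u₂ x t * pdx^[2] u₂ x t
        + 3 * pdx u₁ x t * (u₂ x t) ^ 2
        + 6 * u₁ x t * u₂ x t * pdx u₂ x t := heq₁ (x, t) hp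
  have E2 : pdt u₂ x t
      = -(pdx^[3] u₂ x t) + 3 * (u₂ x t) ^ 2 * pdx u₂ x t
        + 3 * u₁ x t * pdx u₂ x t + 3 * pdx u₁ x t * u₂ x t := heq₂ (x, t) hp
  -- entry functions of N (as functions of y, at fixed t)
  have hfN00 : (fun y => N y t 0 0)
      = (fun y => -((pdx u₁ y t + u₂ y t * pdx u₂ y t : ℝ) : ℂ)) := by
    funext y; simp [hN, he, hf, hn₁, hn₂, hh, Matrix.single]
  have hfN01 : (fun y => N y t 0 1)
      = (fun y => ((pdx^[2] u₁ y t + u₂ y t * pdx^[2] u₂ y t + (pdx u₂ y t) ^ 2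
            - 2 * (u₁ y t) ^ 2 + (u₂ y t) ^ 4 + (u₂ y t) ^ 2 * u₁ y t : ℝ) : ℂ)) := by
    funext y; simp [hN, he, hf, hn₁, hn₂, hh, Matrix.single]
  have hfN02 : (fun y => N y t 0 2)
      = (fun y => ((pdx^[2] u₂ y t - (u₂ y t) ^ 3 - 2 * u₁ y t * u₂ y t : ℝ) : ℂ)) := by
    funext y; simp [hN, he, hf, hn₁, hn₂, hh, Matrix.single]
  have hfN10 : (fun y => N y t 1 0)
      = (fun y => -(((u₂ y t) ^ 2 + 2 * u₁ y t : ℝ) : ℂ)) := by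
    funext y; simp [hN, he, hf, hn₁, hn₂, hh, Matrix.single]
  have hfN11 : (fun y => N y t 1 1)
      = (fun y => ((pdx u₁ y t + u₂ y t * pdx u₂ y t : ℝ) : ℂ)) := by
    funext y; simp [hN, he, hf, hn₁, hn₂, hh, Matrix.single]
  have hfN12 : (fun y => N y t 1 2)
      = (fun y => ((pdx u₂ y t : ℝ) : ℂ)) := by
    funext y; simp [hN, he, hf, hn₁, hn₂, hh, Matrix.single]
  have hfN20 : (fun y => N y t 2 0) = (fun _ => (0 : ℂ)) := by
    funext y; simp [hN, he, hf, hn₁, hn₂, hh, Matrix.single]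
  have hfN21 : (fun y => N y t 2 1) = (fun _ => (0 : ℂ)) := by
    funext y; simp [hN, he, hf, hn₁, hn₂, hh, Matrix.single]
  have hfN22 : (fun y => N y t 2 2) = (fun _ => (0 : ℂ)) := by
    funext y; simp [hN, he, hf, hn₁, hn₂, hh, Matrix.single]
  -- entry functions of M (as functions of s, at fixed x)
  have hfM00 : (fun s => M x s 0 0) = (fun _ => (0 : ℂ)) := by
    funext s; simp [hM, he, hf, hn₁, hn₂, hh, Matrix.single]
  have hfM01 : (fun s => M x s 0 1)
      = (fun s => (((u₂ x s) ^ 2 - u₁ x s : ℝ) : ℂ)) := by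
    funext s; simp [hM, he, hf, hn₁, hn₂, hh, Matrix.single]
  have hfM02 : (fun s => M x s 0 2)
      = (fun s => -((u₂ x s : ℝ) : ℂ)) := by
    funext s; simp [hM, he, hf, hn₁, hn₂, hh, Matrix.single]
  have hfM10 : (fun s => M x s 1 0) = (fun _ => (-1 : ℂ)) := by
    funext s; simp [hM, he, hf, hn₁, hn₂, hh, Matrix.single]
  have hfM11 : (fun s => M x s 1 1) = (fun _ => (0 : ℂ)) := by
    funext s; simp [hM, he, hf, hn₁, hn₂, hh, Matrix.single]
  have hfM12 : (fun s => M x s 1 2) = (fun _ => (0 : ℂ)) := by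
    funext s; simp [hM, he, hf, hn₁, hn₂, hh, Matrix.single]
  have hfM20 : (fun s => M x s 2 0) = (fun _ => (0 : ℂ)) := by
    funext s; simp [hM, he, hf, hn₁, hn₂, hh, Matrix.single]
  have hfM21 : (fun s => M x s 2 1) = (fun _ => (0 : ℂ)) := by
    funext s; simp [hM, he, hf, hn₁, hn₂, hh, Matrix.single]
  have hfM22 : (fun s => M x s 2 2) = (fun _ => (0 : ℂ)) := by
    funext s; simp [hM, he, hf, hn₁, hn₂, hh, Matrix.single]
  -- derivative values
  have dN00 := (((ha1.add (hb0.mul hb1)).ofReal_comp).neg).deriv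
  have dN01 := ((((((ha2.add (hb0.mul hb2)).add (hb1.pow 2)).sub
      ((ha0.pow 2).const_mul 2)).add (hb0.pow 4)).add
      ((hb0.pow 2).mul ha0)).ofReal_comp).deriv
  have dN02 := (((hb2.sub (hb0.pow 3)).sub
      ((ha0.const_mul 2).mul hb0)).ofReal_comp).deriv
  have dN10 := ((((hb0.pow 2).add (ha0.const_mul 2)).ofReal_comp).neg).deriv
  have dN11 := ((ha1.add (hb0.mul hb1)).ofReal_comp).deriv
  have dN12 := (hb1.ofReal_comp).deriv
  have dM01 := (((hbt.pow 2).sub hat).ofReal_comp).deriv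
  have dM02 := ((hbt.ofReal_comp).neg).deriv
  simp only [Pi.add_def, Pi.mul_def, Pi.pow_def, Pi.sub_def, Pi.neg_def] at dN00 dN01 dN02 dN10 dN11 dN12 dM01 dM02
  ext i j
  simp only [Matrix.sub_apply, Matrix.add_apply, Matrix.mul_apply, Fin.sum_univ_three,
    Matrix.zero_apply, mdx, mdt, Matrix.of_apply]
  fin_cases i <;> fin_cases j <;>
    simp only [Fin.zero_eta, Fin.mk_one, Fin.reduceFinMk, Fin.isValue, id_eq]
  · rw [hfN00, hfM00, dN00, deriv_const]
    simp only [hN, hM, he, hf, hn₁, hn₂, hh]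
    simp [Matrix.single]
    push_cast
    ring
  · rw [hfN01, hfM01, dN01, dM01, E1, E2]
    simp only [hN, hM, he, hf, hn₁, hn₂, hh]
    simp [Matrix.single]
    push_cast
    ring
  · rw [hfN02, hfM02, dN02, dM02, E2]
    simp only [hN, hM, he, hf, hn₁, hn₂, hh]
    simp [Matrix.single]
    push_cast
    ring
  · rw [hfN10, hfM10, dN10, deriv_const]
    simp only [hN, hM, he, hf, hn₁, hn₂, hh]
    simp [Matrix.single]
    push_cast
    ring
  · rw [hfN11, hfM11, dN11, deriv_const]
    simp only [hN, hM, he, hf, hn₁, hn₂, hh]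
    simp [Matrix.single]
    push_cast
    ring
  · rw [hfN12, hfM12, dN12, deriv_const]
    simp only [hN, hM, he, hf, hn₁, hn₂, hh]
    simp [Matrix.single]
    push_cast
    ring
  · rw [hfN20, hfM20, deriv_const, deriv_const]
    simp only [hN, hM, he, hf, hn₁, hn₂, hh]
    simp [Matrix.single]
  · rw [hfN21, hfM21, deriv_const, deriv_const]
    simp only [hN, hM, he, hf, hn₁, hn₂, hh]
    simp [Matrix.single]
  · rw [hfN22, hfM22, deriv_const, deriv_const]
    simp only [hN, hM, he, hf, hn₁, hn₂, hh]
    simp [Matrix.single]
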